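/- arXiv:1404.2816 — 7 statements merged into one kernel-verified Lean document; each statement's English description precedes it below -/
import Mathlib

section
/- Let L be a nonempty ideal language (L = Σ*LΣ*) and A the minimal DFA recognizing L. Then A is synchronizing and its language of synchronizing words Syn(A) equals L. -/
/-- The action of a DFA's transition function `δ` extended to words. -/
def actW {Q A : Type*} (δ : Q → A → Q) (q : Q) (w : List A) : Q := w.foldl δ q

/-- the minimal DFA of a nonempty ideal language `L` is
synchronizing, and its language of synchronizing words equals `L`. -/
theorem stmt_1 {Γ Q : Type*} [Fintype Q] (L : Set (List Γ))
    (hne : L.Nonempty)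
    (hIdeal : L = {x | ∃ u w v, w ∈ L ∧ x = u ++ w ++ v})
    (δ : Q → Γ → Q) (q0 : Q) (F : Set Q)
    (hAcc : ∀ w, w ∈ L ↔ actW δ q0 w ∈ F)
    (hReach : ∀ q : Q, ∃ w : List Γ, actW δ q0 w = q)
    (hMin : ∀ p q : Q, (∀ w : List Γ, actW δ p w ∈ F ↔ actW δ q w ∈ F) → p = q) :
    (∃ w : List Γ, ∀ p q : Q, actW δ p w = actW δ q w) ∧
    {w : List Γ | ∀ p q : Q, actW δ p w = actW δ q w} = L := by
  obtain ⟨w0, hw0⟩ := hne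
  have hext : ∀ (u w v : List Γ), w ∈ L → u ++ w ++ v ∈ L := by
    intro u w v hw
    rw [hIdeal]; exact ⟨u, w, v, hw, rfl⟩
  have happ : ∀ (q : Q) (u v : List Γ),
      actW δ q (u ++ v) = actW δ (actW δ q u) v := by
    intro q u v; simp [actW, List.foldl_append]
  set f := actW δ q0 w0 with hf
  have hfF : f ∈ F := (hAcc w0).1 hw0
  have hFfinal : ∀ p ∈ F, ∀ v, actW δ p v ∈ F := by
    intro p hp v
    obtain ⟨u, hu⟩ := hReach p
    have huL : u ∈ L := (hAcc u).2 (hu ▸ hp)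
    have hu2 : u ++ v ∈ L := by
      have := hext [] u v huL; simpa using this
    rw [← hu, ← happ]
    exact (hAcc _).1 hu2
  have hFeq : ∀ p ∈ F, p = f := by
    intro p hp
    apply hMin
    intro v
    exact ⟨fun _ => hFfinal f hfF v, fun _ => hFfinal p hp v⟩
  have habs : ∀ v, actW δ f v = f := fun v => hFeq _ (hFfinal f hfF v)
  have hsync : ∀ w ∈ L, ∀ p : Q, actW δ p w = f := by
    intro w hw p
    obtain ⟨u, hu⟩ := hReach p
    have h2 : u ++ w ∈ L := by
      have := hext u w [] hw; simpa using this
    have hF : actW δ p w ∈ F := by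
      rw [← hu, ← happ]; exact (hAcc _).1 h2
    exact hFeq _ hF
  constructor
  · exact ⟨w0, fun p q => by rw [hsync w0 hw0 p, hsync w0 hw0 q]⟩
  · ext w
    simp only [Set.mem_setOf_eq]
    constructor
    · intro h
      have h1 := h q0 f
      rw [habs w] at h1
      exact (hAcc w).2 (by rw [h1]; exact hfF)
    · intro hw p q
      rw [hsync w hw p, hsync w hw q]
end

section
/- For every nonempty ideal language L, the reset complexity rc(L) is at most the state complexity sc(L). -/
theorem actW_append {Q A : Type*} (δ : Q → A → Q) (q : Q) (u v : List A) :
    actW δ q (u ++ v) = actW δ (actW δ q u) v := List.foldl_append ..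

theorem actW_transport {Γ Q P : Type*} (δ : Q → Γ → Q)
    (e : P ≃ Q) (w : List Γ) (i : P) :
    actW (fun i a => e.symm (δ (e i) a)) i w = e.symm (actW δ (e i) w) := by
  induction w generalizing i with
  | nil => simp [actW]
  | cons a w ih =>
    show actW _ (e.symm (δ (e i) a)) w = _
    rw [ih, actW]
    simp [actW]

/-- for every nonempty ideal language `L`, the reset complexity is
at most the state complexity: given the minimal DFA recognizing `L` (all states
reachable, pairwise inequivalent), there is a synchronizing DFA with at most as
many states whose language of synchronizing words is `L`. -/
theorem stmt_2 {Γ Q : Type*} [Fintype Q] (L : Set (List Γ))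
    (hne : L.Nonempty)
    (hIdeal : L = {x | ∃ u w v, w ∈ L ∧ x = u ++ w ++ v})
    (δ : Q → Γ → Q) (q0 : Q) (F : Set Q)
    (hAcc : ∀ w, w ∈ L ↔ actW δ q0 w ∈ F)
    (hReach : ∀ q : Q, ∃ w : List Γ, actW δ q0 w = q)
    (hMin : ∀ p q : Q, (∀ w : List Γ, actW δ p w ∈ F ↔ actW δ q w ∈ F) → p = q) :
    ∃ m : ℕ, 0 < m ∧ m ≤ Fintype.card Q ∧
      ∃ δB : Fin m → Γ → Fin m,
        (∃ w : List Γ, ∀ p q : Fin m, actW δB p w = actW δB q w) ∧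
        {w : List Γ | ∀ p q : Fin m, actW δB p w = actW δB q w} = L := by
  classical
  obtain ⟨w0, hw0L⟩ := hne
  have hq0 : actW δ q0 w0 ∈ F := (hAcc w0).1 hw0L
  set f := actW δ q0 w0 with hf
  -- from any final state, all words lead to a final state
  have sink : ∀ q ∈ F, ∀ v, actW δ q v ∈ F := by
    intro q hq v
    obtain ⟨u, hu⟩ := hReach q
    have huL : u ∈ L := (hAcc u).2 (hu ▸ hq)
    have huv : u ++ v ∈ L := by
      rw [hIdeal]; exact ⟨[], u, v, huL, by simp⟩
    have := (hAcc (u ++ v)).1 huv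
    rwa [actW_append, hu] at this
  -- all final states are equal to f
  have hFeq : ∀ q ∈ F, q = f := by
    intro q hq
    exact hMin q f (fun w => iff_of_true (sink q hq w) (sink f hq0 w))
  -- every word of L sends every state to f
  have hSync : ∀ w ∈ L, ∀ q : Q, actW δ q w = f := by
    intro w hw q
    obtain ⟨u, hu⟩ := hReach q
    have huw : u ++ w ∈ L := by
      rw [hIdeal]; exact ⟨u, w, [], hw, by simp⟩
    have h2 := (hAcc (u ++ w)).1 huw
    rw [actW_append, hu] at h2
    exact hFeq _ h2
  -- transport to Fin (card Q)
  have hcard : 0 < Fintype.card Q := Fintype.card_pos_iff.mpr ⟨q0⟩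
  refine ⟨Fintype.card Q, hcard, le_refl _, ?_⟩
  let e : Fin (Fintype.card Q) ≃ Q := (Fintype.equivFin Q).symm
  refine ⟨fun i a => e.symm (δ (e i) a), ⟨w0, fun p q => ?_⟩, ?_⟩
  · rw [actW_transport, actW_transport, hSync w0 hw0L, hSync w0 hw0L]
  · ext w
    simp only [Set.mem_setOf_eq]
    constructor
    · intro h
      have hall : ∀ p q : Q, actW δ p w = actW δ q w := by
        intro p q
        have := h (e.symm p) (e.symm q)
        rw [actW_transport, actW_transport, e.apply_symm_apply,
          e.apply_symm_apply] at this
        exact e.symm.injective this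
      have : actW δ q0 w = actW δ f w := hall q0 f
      rw [hAcc, this]
      exact sink f hq0 w
    · intro hw p q
      rw [actW_transport, actW_transport, hSync w hw, hSync w hw]
end

section
/- Let Σ = {a, b}, n ≥ 2, and L_n = Σ* a^{n-2} b Σ*. Suppose B = (Q, Σ, δ) is a synchronizing DFA with Syn(B) = L_n. Then |Q| ≥ n. -/
/-- if a synchronizing DFA has `L_n = Σ* a^{n-2} b Σ*` as its
language of synchronizing words, then it has at least `n` states. -/
theorem stmt_8 {Q : Type*} [Fintype Q] [Nonempty Q] (n : ℕ) (hn : 2 ≤ n)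
    (δ : Q → Bool → Q)
    (hSyn : {w : List Bool | ∀ p q : Q, actW δ p w = actW δ q w}
        = {x | ∃ u v : List Bool, x = u ++ List.replicate (n - 2) false ++ [true] ++ v}) :
    n ≤ Fintype.card Q := by
  classical
  set f : Q → Q := fun q => δ q false with hf
  set g : Q → Q := fun q => δ q true with hg
  have hact : ∀ (i : ℕ) (q : Q), actW δ q (List.replicate i false) = f^[i] q := by
    intro i
    induction i with
    | zero => intro q; rfl
    | succ k ih =>
      intro q
      rw [List.replicate_succ]
      show actW δ (δ q false) (List.replicate k false) = f^[k+1] q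
      rw [ih, Function.iterate_succ_apply]
  have hactb : ∀ (i : ℕ) (q : Q),
      actW δ q (List.replicate i false ++ [true]) = g (f^[i] q) := by
    intro i q
    show List.foldl δ q _ = _
    rw [List.foldl_append, ← hact i q]
    rfl
  have hmem : ∀ w : List Bool, (∀ p q : Q, actW δ p w = actW δ q w) ↔
      ∃ u v : List Bool, w = u ++ List.replicate (n - 2) false ++ [true] ++ v :=
    fun w => Set.ext_iff.mp hSyn w
  -- a^{n-2} b is synchronizing
  have hA : ∀ p q : Q, g (f^[n-2] p) = g (f^[n-2] q) := by
    have h : ∀ p q : Q, actW δ p (List.replicate (n-2) false ++ [true])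
        = actW δ q (List.replicate (n-2) false ++ [true]) :=
      (hmem _).mpr ⟨[], [], by simp⟩
    intro p q
    have := h p q
    rwa [hactb, hactb] at this
  -- a^i b is not synchronizing for i < n-2
  have hB : ∀ i < n-2, ¬ ∀ p q : Q, g (f^[i] p) = g (f^[i] q) := by
    intro i hi hsync
    obtain ⟨u, v, huv⟩ := (hmem (List.replicate i false ++ [true])).mp
      (fun p q => by rw [hactb, hactb]; exact hsync p q)
    have hlen := congrArg List.length huv
    simp [List.length_append, List.length_replicate] at hlen
    omega
  -- a^{n-2} is not synchronizing
  have hC : ¬ ∀ p q : Q, f^[n-2] p = f^[n-2] q := by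
    intro hsync
    obtain ⟨u, v, huv⟩ := (hmem (List.replicate (n-2) false)).mp
      (fun p q => by rw [hact, hact]; exact hsync p q)
    have : true ∈ List.replicate (n-2) false := by rw [huv]; simp
    simp at this
  set S : ℕ → Finset Q := fun i => Finset.image (f^[i]) Finset.univ with hS
  have hS0 : S 0 = Finset.univ := by simp [hS]
  have hmemS : ∀ (i : ℕ) (q : Q), f^[i] q ∈ S i :=
    fun i q => Finset.mem_image_of_mem _ (Finset.mem_univ q)
  have hSsucc : ∀ i, S (i+1) = Finset.image f (S i) := by
    intro i
    show Finset.image (f^[i+1]) Finset.univ = _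
    rw [Function.iterate_succ', Finset.image_image]
  have hSsub : ∀ i, S (i+1) ⊆ S i := by
    intro i x hx
    simp only [hS, Finset.mem_image, Finset.mem_univ, true_and] at hx ⊢
    obtain ⟨q, hq⟩ := hx
    exact ⟨f q, by rw [← hq, Function.iterate_succ_apply]⟩
  have hstab : ∀ i, S (i+1) = S i → ∀ j, S (i + j) = S i := by
    intro i h j
    induction j with
    | zero => rfl
    | succ k ih =>
      show S (i + k + 1) = S i
      rw [hSsucc, ih, ← hSsucc, h]
  have hdec : ∀ i < n-2, (S (i+1)).card < (S i).card := by
    intro i hi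
    by_cases heq : S (i+1) = S i
    · exfalso
      have hstab' : S (n-2) = S i := by
        have := hstab i heq (n-2-i)
        rwa [Nat.add_sub_cancel' (le_of_lt hi)] at this
      apply hB i hi
      intro p q
      have hp : f^[i] p ∈ S (n-2) := by rw [hstab']; exact hmemS i p
      have hq : f^[i] q ∈ S (n-2) := by rw [hstab']; exact hmemS i q
      simp only [hS, Finset.mem_image, Finset.mem_univ, true_and] at hp hq
      obtain ⟨p', hp'⟩ := hp
      obtain ⟨q', hq'⟩ := hq
      rw [← hp', ← hq', hA p' q']
    · exact Finset.card_lt_card (Finset.ssubset_iff_subset_ne.mpr ⟨hSsub i, heq⟩)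
  have h2 : 2 ≤ (S (n-2)).card := by
    by_contra hcon
    push_neg at hcon
    have hne : (S (n-2)).Nonempty :=
      ⟨f^[n-2] (Classical.arbitrary Q), hmemS _ _⟩
    have hpos := Finset.card_pos.mpr hne
    have hone : (S (n-2)).card = 1 := by omega
    obtain ⟨x, hx⟩ := Finset.card_eq_one.mp hone
    apply hC
    intro p q
    have hp := hmemS (n-2) p
    have hq := hmemS (n-2) q
    rw [hx, Finset.mem_singleton] at hp hq
    rw [hp, hq]
  have hchain : ∀ k, k ≤ n-2 → (S k).card + k ≤ (S 0).card := by
    intro k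
    induction k with
    | zero => intro _; omega
    | succ m ih =>
      intro hm
      have h1 := hdec m (by omega)
      have h3 := ih (by omega)
      omega
  have hfin : (S (n-2)).card + (n-2) ≤ (S 0).card := hchain (n-2) le_rfl
  rw [hS0] at hfin
  have hcardQ : Finset.univ.card = Fintype.card Q := Finset.card_univ
  omega
end

section
/- Let Σ = {a, b}, n ≥ 2, and L_n = Σ* a^{n-2} b Σ*. Then the state complexity of L_n equals n, and the reset complexity of L_n equals n; in particular rc(L_n) = sc(L_n). -/
namespace Stmt9

lemma actW_concat {Q A : Type*} (δ : Q → A → Q) (q : Q) (w : List A) (x : A) :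
    actW δ q (w ++ [x]) = δ (actW δ q w) x := by simp [actW]

lemma actW_append {Q A : Type*} (δ : Q → A → Q) (q : Q) (w v : List A) :
    actW δ q (w ++ v) = actW δ (actW δ q w) v := by simp [actW]

def Lset (n : ℕ) : Set (List Bool) :=
  {x | ∃ u v : List Bool, x = u ++ List.replicate (n - 2) false ++ [true] ++ v}

lemma rep_not_mem (n k : ℕ) : List.replicate k false ∉ Lset n := by
  rintro ⟨u, v, h⟩
  have : true ∈ List.replicate k false := by
    rw [h]; simp
  simpa using List.eq_of_mem_replicate this

lemma repTrue_mem (n k : ℕ) (hk : n - 2 ≤ k) : List.replicate k false ++ [true] ∈ Lset n := by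
  refine ⟨List.replicate (k - (n-2)) false, [], ?_⟩
  rw [← List.replicate_add]
  have : k - (n-2) + (n-2) = k := by omega
  rw [this]; simp

lemma repTrue_not_mem (n k : ℕ) (hk : k < n - 2) : List.replicate k false ++ [true] ∉ Lset n := by
  rintro ⟨u, v, h⟩
  have := congrArg (List.count false) h
  simp [List.count_append, List.count_replicate] at this
  omega

lemma mem_append_false (n : ℕ) (w : List Bool) :
    w ++ [false] ∈ Lset n ↔ w ∈ Lset n := by
  constructor
  · rintro ⟨u, v, h⟩
    rcases v.eq_nil_or_concat with rfl | ⟨v', x, rfl⟩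
    · have h' : w ++ [false] = (u ++ List.replicate (n-2) false) ++ [true] := by
        simpa [List.append_assoc] using h
      have := (List.append_inj' h' rfl).2
      simp at this
    · have h' : w ++ [false] = (u ++ List.replicate (n-2) false ++ [true] ++ v') ++ [x] := by
        simpa [List.append_assoc] using h
      obtain ⟨h1, h2⟩ := List.append_inj' h' rfl
      exact ⟨u, v', h1⟩
  · rintro ⟨u, v, rfl⟩
    exact ⟨u, v ++ [false], by simp [List.append_assoc]⟩

lemma mem_append_true (n : ℕ) (w : List Bool) :
    w ++ [true] ∈ Lset n ↔ (w ∈ Lset n ∨ ∃ u, w = u ++ List.replicate (n-2) false) := by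
  constructor
  · rintro ⟨u, v, h⟩
    rcases v.eq_nil_or_concat with rfl | ⟨v', x, rfl⟩
    · have h' : w ++ [true] = (u ++ List.replicate (n-2) false) ++ [true] := by
        simpa [List.append_assoc] using h
      exact Or.inr ⟨u, (List.append_inj' h' rfl).1⟩
    · have h' : w ++ [true] = (u ++ List.replicate (n-2) false ++ [true] ++ v') ++ [x] := by
        simpa [List.append_assoc] using h
      exact Or.inl ⟨u, v', (List.append_inj' h' rfl).1⟩
  · rintro (⟨u, v, rfl⟩ | ⟨u, rfl⟩)
    · exact ⟨u, v ++ [true], by simp [List.append_assoc]⟩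
    · exact ⟨u, [], by simp [List.append_assoc]⟩

def dlt (n : ℕ) : Fin n → Bool → Fin n := fun i b =>
  if b then
    (if i.val = n - 2 then ⟨n - 1, by have := i.pos; omega⟩
     else if i.val = n - 1 then i else ⟨0, i.pos⟩)
  else
    (if h : n - 2 ≤ i.val then i else ⟨i.val + 1, by have := i.isLt; omega⟩)

lemma dlt_mono (n : ℕ) (hn : 2 ≤ n) (p q : Fin n) (hpq : p.val ≤ q.val) (x : Bool) :
    (dlt n p x).val ≤ (dlt n q x).val := by
  have hp := p.isLt; have hq := q.isLt
  cases x <;> simp only [dlt] <;> split_ifs <;> simp_all <;> omega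

lemma actW_mono (n : ℕ) (hn : 2 ≤ n) (w : List Bool) :
    ∀ p q : Fin n, p.val ≤ q.val → (actW (dlt n) p w).val ≤ (actW (dlt n) q w).val := by
  induction w with
  | nil => intro p q h; exact h
  | cons x w ih =>
      intro p q h
      exact ih _ _ (dlt_mono n hn p q h x)

lemma actW_sink (n : ℕ) (hn : 2 ≤ n) (w : List Bool) (q : Fin n) (hq : q.val = n - 1) :
    (actW (dlt n) q w).val = n - 1 := by
  induction w generalizing q with
  | nil => exact hq
  | cons x w ih =>
      have : actW (dlt n) q (x :: w) = actW (dlt n) (dlt n q x) w := rfl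
      rw [this]
      apply ih
      cases x <;> simp only [dlt] <;> split_ifs <;> omega


lemma rep_concat_false (k : ℕ) :
    List.replicate k false ++ [false] = ([false] : List Bool) ++ List.replicate k false := by
  rw [← List.replicate_succ', List.replicate_succ]; rfl

lemma dlt_false_val_hi (n : ℕ) (i : Fin n) (h : n - 2 ≤ i.val) :
    (dlt n i false).val = i.val := by simp [dlt, h]

lemma dlt_false_val_lo (n : ℕ) (i : Fin n) (h : ¬ n - 2 ≤ i.val) :
    (dlt n i false).val = i.val + 1 := by simp [dlt, h]

lemma dlt_true_val_mid (n : ℕ) (i : Fin n) (h : i.val = n - 2) :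
    (dlt n i true).val = n - 1 := by simp [dlt, h]

lemma dlt_true_val_hi (n : ℕ) (hn : 2 ≤ n) (i : Fin n) (h : i.val = n - 1) :
    (dlt n i true).val = n - 1 := by
  have h2 : ¬ i.val = n - 2 := by omega
  simp [dlt, h, h2]
  rw [if_neg (show ¬ n - 1 = n - 2 by omega)]
  exact h

lemma dlt_true_val_lo (n : ℕ) (i : Fin n) (h : i.val < n - 2) :
    (dlt n i true).val = 0 := by
  have h1 : ¬ i.val = n - 2 := by omega
  have h2 : ¬ i.val = n - 1 := by have := i.isLt; omega
  simp [dlt, h1, h2]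

lemma key (n : ℕ) (hn : 2 ≤ n) (q0 : Fin n) (h0 : q0.val = 0) (w : List Bool) :
    (w ∈ Lset n ↔ (actW (dlt n) q0 w).val = n - 1) ∧
    ((actW (dlt n) q0 w).val ≠ n - 1 →
      (∃ u, w = u ++ List.replicate (actW (dlt n) q0 w).val false) ∧
      ((actW (dlt n) q0 w).val + 1 ≤ n - 2 →
        ∀ u, w ≠ u ++ List.replicate ((actW (dlt n) q0 w).val + 1) false)) := by
  induction w using List.reverseRecOn with
  | nil =>
      constructor
      · constructor
        · rintro ⟨u, v, h⟩
          exact absurd (congrArg List.length h) (by simp)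
        · intro h
          rw [show (actW (dlt n) q0 []).val = q0.val from rfl, h0] at h
          omega
      · intro _
        refine ⟨⟨[], by simp [actW, h0]⟩, ?_⟩
        intro _ u hu
        exact absurd (congrArg List.length hu) (by simp [actW, h0])
  | append_singleton w x ih =>
      obtain ⟨ih1, ih2⟩ := ih
      rw [actW_concat]
      set s := actW (dlt n) q0 w with hs
      have hslt := s.isLt
      by_cases hL : s.val = n - 1
      · -- w ∈ Lset n
        have hw : w ∈ Lset n := ih1.mpr hL
        have ht : (dlt n s x).val = n - 1 := by
          cases x
          · rw [dlt_false_val_hi n s (by omega)]; omega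
          · exact dlt_true_val_hi n hn s hL
        rw [ht]
        refine ⟨⟨fun _ => rfl, fun _ => ?_⟩, fun h => absurd rfl h⟩
        cases x
        · exact (mem_append_false n w).mpr hw
        · exact (mem_append_true n w).mpr (Or.inl hw)
      · have hw : w ∉ Lset n := fun h => hL (ih1.mp h)
        obtain ⟨⟨u, hu⟩, hneg⟩ := ih2 hL
        cases x
        · -- letter a = false
          by_cases h2 : n - 2 ≤ s.val
          · have hsv : s.val = n - 2 := by omega
            rw [dlt_false_val_hi n s h2]
            constructor
            · rw [mem_append_false n w, ih1]
            · intro _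
              refine ⟨⟨u ++ [false], ?_⟩, ?_⟩
              · rw [hu, List.append_assoc, rep_concat_false, ← List.append_assoc]
              · intro hle; omega
          · rw [dlt_false_val_lo n s h2]
            constructor
            · rw [mem_append_false n w, ih1]
              constructor <;> intro h <;> omega
            · intro _
              refine ⟨⟨u, by rw [hu, List.append_assoc, ← List.replicate_succ']⟩, ?_⟩
              intro hle u' hu'
              have heq : w ++ [false] = (u' ++ List.replicate (s.val + 1) false) ++ [false] := by
                rw [hu',
                  show List.replicate (s.val + 1 + 1) false
                      = List.replicate (s.val + 1) false ++ [false] from List.replicate_succ' ..,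
                  ← List.append_assoc]
              have hww : w = u' ++ List.replicate (s.val + 1) false :=
                (List.append_inj' heq rfl).1
              exact hneg (by omega) u' hww
        · -- letter b = true
          rcases (by omega : s.val = n - 2 ∨ s.val < n - 2) with hsv | hsv
          · rw [dlt_true_val_mid n s hsv]
            refine ⟨⟨fun _ => rfl, fun _ => ?_⟩, fun h => absurd rfl h⟩
            refine (mem_append_true n w).mpr (Or.inr ⟨u, ?_⟩)
            rw [hu, hsv]
          · rw [dlt_true_val_lo n s hsv]
            constructor
            · constructor
              · intro hmem
                rcases (mem_append_true n w).mp hmem with h | ⟨u', hu'⟩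
                · exact absurd h hw
                · exfalso
                  apply hneg (by omega) (u' ++ List.replicate (n - 2 - (s.val + 1)) false)
                  rw [hu', List.append_assoc, ← List.replicate_add]
                  congr 2
                  omega
              · intro h; omega
            · intro _
              refine ⟨⟨w ++ [true], by simp⟩, ?_⟩
              intro _ u' hu'
              have hu'' : w ++ [true] = u' ++ [false] := by
                simpa using hu'
              have := (List.append_inj' hu'' rfl).2
              simp at this

lemma part1 (n : ℕ) (hn : 2 ≤ n) :
    ∃ (δ : Fin n → Bool → Fin n) (q0 : Fin n) (F : Set (Fin n)),
      ∀ w, w ∈ Lset n ↔ actW δ q0 w ∈ F :=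
  ⟨dlt n, ⟨0, by omega⟩, {q | q.val = n - 1}, fun w => (key n hn ⟨0, by omega⟩ rfl w).1⟩

lemma part3 (n : ℕ) (hn : 2 ≤ n) :
    {w : List Bool | ∀ p q : Fin n, actW (dlt n) p w = actW (dlt n) q w} = Lset n := by
  ext w
  constructor
  · intro h
    have h1 := congrArg Fin.val (h ⟨0, by omega⟩ ⟨n - 1, by omega⟩)
    rw [actW_sink n hn w ⟨n - 1, by omega⟩ rfl] at h1
    exact (key n hn ⟨0, by omega⟩ rfl w).1.mpr h1
  · intro hw p q
    have hbase := (key n hn ⟨0, by omega⟩ rfl w).1.mp hw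
    have hval : ∀ r : Fin n, (actW (dlt n) r w).val = n - 1 := by
      intro r
      have h1 := actW_mono n hn w ⟨0, by omega⟩ r (by simp)
      have h2 := (actW (dlt n) r w).isLt
      omega
    exact Fin.ext (by rw [hval p, hval q])

lemma part2 (n : ℕ) (hn : 2 ≤ n) (Q : Type) [Fintype Q] (δ : Q → Bool → Q) (q0 : Q)
    (F : Set Q) (hrec : ∀ w, w ∈ Lset n ↔ actW δ q0 w ∈ F) : n ≤ Fintype.card Q := by
  classical
  set W : ℕ → List Bool := fun i =>
    if i = n - 1 then List.replicate (n - 2) false ++ [true] else List.replicate i false with hW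
  have helper : ∀ i j : ℕ, i < j → j ≤ n - 1 → actW δ q0 (W i) ≠ actW δ q0 (W j) := by
    intro i j hij hj heq
    have hWi : W i = List.replicate i false := by
      rw [hW]; simp only [if_neg (by omega : ¬ i = n - 1)]
    by_cases hjtop : j = n - 1
    · have hWj : W j ∈ Lset n := by
        rw [hW]; simp only [hjtop, if_pos rfl]
        exact repTrue_mem n (n - 2) le_rfl
      have hWi' : W i ∉ Lset n := by rw [hWi]; exact rep_not_mem n i
      rw [hrec] at hWj hWi'
      rw [heq] at hWi'
      exact hWi' hWj
    · have hWj : W j = List.replicate j false := by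
        rw [hW]; simp only [if_neg hjtop]
      set z : List Bool := List.replicate (n - 2 - j) false ++ [true] with hz
      have hmemj : W j ++ z ∈ Lset n := by
        rw [hWj, hz, ← List.append_assoc, ← List.replicate_add]
        have : j + (n - 2 - j) = n - 2 := by omega
        rw [this]
        exact repTrue_mem n (n - 2) le_rfl
      have hmemi : W i ++ z ∉ Lset n := by
        rw [hWi, hz, ← List.append_assoc, ← List.replicate_add]
        exact repTrue_not_mem n (i + (n - 2 - j)) (by omega)
      rw [hrec, actW_append, heq, ← actW_append, ← hrec] at hmemi
      exact hmemi hmemj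
  have hinj : Function.Injective (fun i : Fin n => actW δ q0 (W i.val)) := by
    intro i j h
    by_contra hne
    have hne' : i.val ≠ j.val := fun hv => hne (Fin.ext hv)
    have hi := i.isLt; have hj := j.isLt
    rcases lt_trichotomy i.val j.val with hlt | hlt | hlt
    · exact helper i.val j.val hlt (by omega) h
    · exact hne' hlt
    · exact helper j.val i.val hlt (by omega) h.symm
  calc n = Fintype.card (Fin n) := (Fintype.card_fin n).symm
    _ ≤ Fintype.card Q := Fintype.card_le_of_injective _ hinj

lemma part4 (n : ℕ) (hn : 2 ≤ n) (Q : Type) [Fintype Q] (hne : Nonempty Q)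
    (δ : Q → Bool → Q)
    (hS : {w : List Bool | ∀ p q : Q, actW δ p w = actW δ q w} = Lset n) :
    n ≤ Fintype.card Q := by
  classical
  obtain ⟨qs⟩ := hne
  have hmem : ∀ w ∈ Lset n, ∀ p q : Q, actW δ p w = actW δ q w := by
    intro w hw; rw [← hS] at hw; exact hw
  have hnmem : ∀ w ∉ Lset n, ∃ p q : Q, actW δ p w ≠ actW δ q w := by
    intro w hw
    by_contra h
    push_neg at h
    exact hw (by rw [← hS]; exact h)
  set S : ℕ → Finset Q :=
    fun k => Finset.univ.image (fun q => actW δ q (List.replicate k false)) with hSdef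
  have hstep : ∀ k, S (k + 1) = (S k).image (fun q => δ q false) := by
    intro k
    rw [hSdef]
    simp only [Finset.image_image]
    apply Finset.image_congr
    intro q _
    simp only [Function.comp_apply]
    rw [List.replicate_succ', actW_concat]
  have hS0 : S 0 = Finset.univ := by
    ext x
    simp [hSdef, actW]
  have hanti : ∀ k, S (k + 1) ⊆ S k := by
    intro k
    induction k with
    | zero => rw [hS0]; exact Finset.subset_univ _
    | succ k ih =>
        have h2 := Finset.image_subset_image (f := fun q => δ q false) ih
        rw [← hstep (k + 1), ← hstep k] at h2
        exact h2
  have hle : ∀ i j : ℕ, i ≤ j → S j ⊆ S i := by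
    intro i j hij
    induction j, hij using Nat.le_induction with
    | base => exact Finset.Subset.refl _
    | succ j hij ih => exact (hanti j).trans ih
  have heqprop : ∀ k, S k = S (k + 1) → ∀ j, k ≤ j → S j = S k := by
    intro k hk j hj
    induction j, hj using Nat.le_induction with
    | base => rfl
    | succ j hj ih => rw [hstep j, ih, ← hstep k, ← hk]
  have hstrict : ∀ k, k < n - 2 → S k ≠ S (k + 1) := by
    intro k hk heq
    have hkn : S (n - 2) = S k := heqprop k heq (n - 2) (by omega)
    apply repTrue_not_mem n k hk
    rw [← hS]
    intro p q
    have hval : ∀ r : Q, actW δ r (List.replicate k false ++ [true])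
        = actW δ qs (List.replicate (n - 2) false ++ [true]) := by
      intro r
      have hr : actW δ r (List.replicate k false) ∈ S (n - 2) := by
        rw [hkn, hSdef]
        exact Finset.mem_image_of_mem _ (Finset.mem_univ r)
      rw [hSdef] at hr
      obtain ⟨r', _, hr'⟩ := Finset.mem_image.mp hr
      rw [actW_concat, ← hr', ← actW_concat δ r']
      exact hmem _ (repTrue_mem n (n - 2) le_rfl) r' qs
    rw [hval p, hval q]
  have hbase : 2 ≤ (S (n - 2)).card := by
    obtain ⟨p, q, hpq⟩ := hnmem _ (rep_not_mem n (n - 2))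
    refine Finset.one_lt_card.mpr ⟨_, ?_, _, ?_, hpq⟩
    · exact Finset.mem_image_of_mem _ (Finset.mem_univ p)
    · exact Finset.mem_image_of_mem _ (Finset.mem_univ q)
  have hchain : ∀ j, j ≤ n - 2 → 2 + j ≤ (S (n - 2 - j)).card := by
    intro j
    induction j with
    | zero => intro _; simpa using hbase
    | succ j ih =>
        intro hj
        have h1 : 2 + j ≤ (S (n - 2 - j)).card := ih (by omega)
        have hkk : n - 2 - (j + 1) + 1 = n - 2 - j := by omega
        have hss : S (n - 2 - j) ⊂ S (n - 2 - (j + 1)) := by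
          rw [← hkk]
          exact Finset.ssubset_iff_subset_ne.mpr
            ⟨hanti _, fun h => hstrict _ (by omega) h.symm⟩
        have := Finset.card_lt_card hss
        omega
  have hfin := hchain (n - 2) le_rfl
  simp only [Nat.sub_self] at hfin
  rw [hS0, Finset.card_univ] at hfin
  omega

end Stmt9

/-- for `L_n = Σ* a^{n-2} b Σ*` over a binary alphabet, both the
state complexity and the reset complexity equal `n`. -/
theorem stmt_9 (n : ℕ) (hn : 2 ≤ n) (L : Set (List Bool))
    (hL : L = {x | ∃ u v : List Bool, x = u ++ List.replicate (n - 2) false ++ [true] ++ v}) :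
    -- state complexity equals n: some DFA with n states recognizes L ...
    (∃ (δ : Fin n → Bool → Fin n) (q0 : Fin n) (F : Set (Fin n)),
        ∀ w, w ∈ L ↔ actW δ q0 w ∈ F) ∧
    -- ... and every DFA recognizing L has at least n states
    (∀ (Q : Type) (_ : Fintype Q) (δ : Q → Bool → Q) (q0 : Q) (F : Set Q),
        (∀ w, w ∈ L ↔ actW δ q0 w ∈ F) → n ≤ Fintype.card Q) ∧
    -- reset complexity equals n: some synchronizing DFA with n states has L as
    -- its language of synchronizing words ...
    (∃ δ : Fin n → Bool → Fin n,
        {w : List Bool | ∀ p q : Fin n, actW δ p w = actW δ q w} = L) ∧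
    -- ... and every such synchronizing DFA has at least n states
    (∀ (Q : Type) (_ : Fintype Q) (_ : Nonempty Q) (δ : Q → Bool → Q),
        {w : List Bool | ∀ p q : Q, actW δ p w = actW δ q w} = L →
        n ≤ Fintype.card Q) := by
  subst hL
  refine ⟨Stmt9.part1 n hn, ?_, ⟨Stmt9.dlt n, Stmt9.part3 n hn⟩, ?_⟩
  · intro Q fQ δ q0 F h
    exact @Stmt9.part2 n hn Q fQ δ q0 F h
  · intro Q fQ hne δ h
    exact @Stmt9.part4 n hn Q fQ hne δ h
end

section
/- Let C_n be the Černý automaton with states {0, ..., n−1}, where b acts as the cycle i ↦ i+1 (mod n) and a fixes all states except n−1, with (n−1)·a = 0. Then in the power automaton of C_n, every nonempty subset H ⊆ {0, ..., n−1} is reachable from the full state set, i.e., for every nonempty H there exists a word w with Q·w = H. -/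
/-- The Černý automaton `C_n` on states `Fin n` over the alphabet `Bool`:
the letter `b` (encoded `true`) acts as the cycle `i ↦ i + 1 (mod n)`, and the
letter `a` (encoded `false`) fixes every state except `n − 1`, which it sends
to `0`. -/
def cerny {n : ℕ} (i : Fin n) (x : Bool) : Fin n :=
  if x then ⟨(i.val + 1) % n, Nat.mod_lt _ i.pos⟩
  else if i.val = n - 1 then ⟨0, i.pos⟩ else i

section aux

variable {n : ℕ} [NeZero n]

open Fin.NatCast Fin.CommRing

omit [NeZero n] in
lemma actW_append_s11 (q : Fin n) (u v : List Bool) :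
    actW cerny q (u ++ v) = actW cerny (actW cerny q u) v := by
  simp [actW, List.foldl_append]

lemma cerny_true (hn : 2 ≤ n) (q : Fin n) : cerny q true = q + 1 := by
  apply Fin.ext
  simp [cerny, Fin.add_def, Fin.val_one', Nat.one_mod_eq_one.mpr (show n ≠ 1 by omega)]

lemma cerny_false (q : Fin n) :
    cerny q false = if q.val = n - 1 then (0 : Fin n) else q := by
  rfl

lemma actW_replicate (hn : 2 ≤ n) (q : Fin n) (t : ℕ) :
    actW cerny q (List.replicate t true) = q + (t : Fin n) := by
  induction t generalizing q with
  | zero => simp [actW]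
  | succ t ih =>
    rw [List.replicate_succ]
    show actW cerny (cerny q true) (List.replicate t true) = _
    rw [cerny_true hn, ih]
    push_cast
    ring

omit [NeZero n] in
lemma img_append (S : Finset (Fin n)) (u v : List Bool) :
    S.image (fun q => actW cerny q (u ++ v)) =
      (S.image (fun q => actW cerny q u)).image (fun q => actW cerny q v) := by
  rw [Finset.image_image]
  exact Finset.image_congr (fun q _ => actW_append_s11 q u v)

lemma img_replicate (hn : 2 ≤ n) (S : Finset (Fin n)) (t : ℕ) :
    S.image (fun q => actW cerny q (List.replicate t true)) =
      S.image (fun q => q + (t : Fin n)) :=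
  Finset.image_congr (fun q _ => actW_replicate hn q t)

/-- adjacent pair: some `g ∉ H` with `g + 1 ∈ H` -/
lemma exists_adjacent (hn : 2 ≤ n) (H : Finset (Fin n)) (hH : H.Nonempty)
    (hne : H ≠ Finset.univ) : ∃ g : Fin n, g ∉ H ∧ g + 1 ∈ H := by
  obtain ⟨h0, hh0⟩ := hH
  obtain ⟨g0, hg0⟩ : ∃ g0 : Fin n, g0 ∉ H := by
    by_contra hc
    push_neg at hc
    exact hne (Finset.eq_univ_of_forall hc)
  have hP : ∃ j : ℕ, g0 + (j : Fin n) + 1 ∈ H := by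
    refine ⟨(h0 - g0 - 1).val, ?_⟩
    rw [Fin.cast_val_eq_self, show g0 + (h0 - g0 - 1) + 1 = h0 by ring]
    exact hh0
  classical
  rcases hfind : Nat.find hP with _ | k'
  · refine ⟨g0, hg0, ?_⟩
    have := Nat.find_spec hP
    rw [hfind] at this
    simpa using this
  · have hk1 := Nat.find_spec hP
    rw [hfind] at hk1
    have hmin : g0 + (k' : Fin n) + 1 ∉ H := Nat.find_min hP (by omega)
    refine ⟨g0 + (k' : Fin n) + 1, hmin, ?_⟩
    have heq : g0 + ((k' + 1 : ℕ) : Fin n) + 1 = g0 + (k' : Fin n) + 1 + 1 := by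
      push_cast; ring
    rw [← heq]
    exact hk1

/-- Merge lemma: any nonempty proper `H` is the image of a strictly larger set. -/
lemma merge (hn : 2 ≤ n) (H : Finset (Fin n)) (hH : H.Nonempty)
    (hne : H ≠ Finset.univ) :
    ∃ H' : Finset (Fin n), H'.card = H.card + 1 ∧
      ∃ u : List Bool, H'.image (fun q => actW cerny q u) = H := by
  classical
  obtain ⟨g, hg, hg1⟩ := exists_adjacent hn H hH hne
  set last : Fin n := ⟨n - 1, by omega⟩ with hlast
  set τ : Fin n := last - g with hτ
  refine ⟨insert g H, Finset.card_insert_of_notMem hg, ?_⟩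
  refine ⟨List.replicate τ.val true ++ [false] ++ List.replicate (-τ).val true, ?_⟩
  rw [img_append, img_append]
  simp only [img_replicate hn, Fin.cast_val_eq_self]
  have hlast1 : last + 1 = 0 := by
    apply Fin.ext
    simp only [Fin.add_def, Fin.val_one', Nat.one_mod_eq_one.mpr (show n ≠ 1 by omega),
      hlast, Fin.val_zero]
    rw [Nat.sub_add_cancel (by omega), Nat.mod_self]
  have himg1 : (insert g H).image (fun q => q + τ)
      = insert last (H.image (fun q => q + τ)) := by
    rw [Finset.image_insert]
    congr 1
    simp [hτ]
  rw [himg1]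
  have hzero : (0 : Fin n) ∈ H.image (fun q => q + τ) := by
    refine Finset.mem_image.mpr ⟨g + 1, hg1, ?_⟩
    rw [hτ, show g + 1 + (last - g) = last + 1 by ring, hlast1]
  have hlastnot : last ∉ H.image (fun q => q + τ) := by
    intro hmem
    obtain ⟨x, hx, hxe⟩ := Finset.mem_image.mp hmem
    have hxg : x = g := by
      have h1 : x + (last - g) = last := hxe
      have h2 := congrArg (fun z => z - (last - g)) h1
      simpa using h2
    exact hg (hxg ▸ hx)
  have halast : actW cerny last [false] = 0 := by
    show cerny last false = 0
    rw [cerny_false, if_pos rfl]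
  have himg2 : (insert last (H.image (fun q => q + τ))).image (fun q => actW cerny q [false])
      = H.image (fun q => q + τ) := by
    rw [Finset.image_insert, halast]
    have hfix : (H.image (fun q => q + τ)).image (fun q => actW cerny q [false])
        = H.image (fun q => q + τ) := by
      apply (Finset.image_congr ?_).trans Finset.image_id
      intro q hq
      show cerny q false = q
      rw [cerny_false, if_neg]
      intro hv
      exact hlastnot ((Fin.ext hv : q = last) ▸ hq)
    rw [hfix]
    exact Finset.insert_eq_self.mpr hzero
  rw [himg2, Finset.image_image]
  have hid : ((fun q => q + -τ) ∘ fun q => q + τ) = id := by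
    funext q; simp
  rw [hid, Finset.image_id]

end aux

/-- in the power automaton of `C_n`, every nonempty subset is
reachable from the full state set. -/
theorem stmt_11 (n : ℕ) (hn : 2 ≤ n) (H : Finset (Fin n)) (hH : H.Nonempty) :
    ∃ w : List Bool, Finset.univ.image (fun q => actW cerny q w) = H := by
  haveI : NeZero n := ⟨by omega⟩
  classical
  suffices h : ∀ (k : ℕ) (H : Finset (Fin n)), H.Nonempty → n - H.card ≤ k →
      ∃ w : List Bool, Finset.univ.image (fun q => actW cerny q w) = H from
    h n H hH (by omega)
  intro k
  induction k with
  | zero =>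
    intro H hH hcard
    have hle : H.card ≤ n := by
      simpa using Finset.card_le_univ H
    have hc : H.card = n := by omega
    have hu : H = Finset.univ := Finset.eq_univ_of_card H (by simpa using hc)
    exact ⟨[], by simp [hu, actW]⟩
  | succ k ih =>
    intro H hH hcard
    by_cases hu : H = Finset.univ
    · exact ⟨[], by simp [hu, actW]⟩
    · obtain ⟨H', hcard', u, hu'⟩ := merge hn H hH hu
      have hlt : H.card < n := by
        have hle : H.card ≤ n := by simpa using Finset.card_le_univ H
        rcases lt_or_eq_of_le hle with h | h
        · exact h
        · exact absurd (Finset.eq_univ_of_card H (by simpa using h)) hu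
      obtain ⟨w, hw⟩ := ih H' (Finset.card_pos.mp (by omega)) (by omega)
      refine ⟨w ++ u, ?_⟩
      rw [img_append, hw, hu']
end

section
/- In the Černý automaton C_n, for any two distinct nonempty non-singleton subsets H, S of the state set, there exists a word w synchronizing exactly one of H and S (i.e., |H·w| = 1 and |S·w| > 1, or vice versa). Consequently, distinct non-singleton subsets are inequivalent as states of the power automaton. -/
namespace CernyAux

variable {n : ℕ}

open Fin.NatCast Fin.CommRing

lemma actW_cons {Q A : Type*} (δ : Q → A → Q) (q : Q) (x : A) (w : List A) :
    actW δ q (x :: w) = actW δ (δ q x) w := rfl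

lemma actW_append {Q A : Type*} (δ : Q → A → Q) (q : Q) (u v : List A) :
    actW δ q (u ++ v) = actW δ (actW δ q u) v := by
  simp [actW]

lemma cerny_true [NeZero n] (z : Fin n) : cerny z true = z + 1 := by
  unfold cerny
  ext
  simp [Fin.add_def, Fin.val_one' n]

lemma cerny_false (z : Fin n) :
    cerny z false = if z.val = n - 1 then ⟨0, z.pos⟩ else z := by
  simp [cerny]

lemma actW_replicate_true [NeZero n] (k : ℕ) (z : Fin n) :
    actW cerny z (List.replicate k true) = z + (k : Fin n) := by
  induction k generalizing z with
  | zero => simp [actW]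
  | succ k ih =>
      rw [List.replicate_succ, actW_cons, cerny_true, ih]
      push_cast
      ring

lemma sub_one_val [NeZero n] (hn : 2 ≤ n) (z : Fin n) (hz : z ≠ 0) :
    (z - 1).val = z.val - 1 := by
  have h1' : (1 : Fin n).val = 1 := by
    rw [Fin.val_one' n, Nat.mod_eq_of_lt (by omega)]
  rw [Fin.sub_def]
  simp only [h1']
  have hzv : z.val ≠ 0 := fun hc => hz (by ext; simpa using hc)
  have hlt : z.val < n := z.isLt
  have : n - 1 + z.val = (z.val - 1) + n := by omega
  rw [this, Nat.add_mod_right, Nat.mod_eq_of_lt (by omega)]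

def G (n d : ℕ) : List Bool :=
  match d with
  | 0 => []
  | d + 1 => (List.replicate (n - 1) true ++ [false]) ++ G n d

lemma step_eq [NeZero n] (hn : 2 ≤ n) (z : Fin n) :
    actW cerny z (List.replicate (n - 1) true ++ [false]) =
      if z = 0 then 0 else z - 1 := by
  rw [actW_append, actW_replicate_true]
  have hcast : ((n - 1 : ℕ) : Fin n) = -1 := by
    rw [Nat.cast_sub (by omega), Fin.natCast_self, Nat.cast_one, zero_sub]
  rw [hcast, show z + -1 = z - 1 by ring]
  show cerny (z - 1) false = _
  rw [cerny_false]
  by_cases hz : z = 0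
  · subst hz
    have hv : ((0 : Fin n) - 1).val = n - 1 := by
      rw [zero_sub, Fin.coe_neg]
      have h1' : (1 : Fin n).val = 1 := by
        rw [Fin.val_one' n, Nat.mod_eq_of_lt (by omega)]
      rw [h1', Nat.mod_eq_of_lt (by omega)]
    rw [if_pos hv, if_pos rfl]
    ext
    simp
  · have hval : (z - 1).val = z.val - 1 := sub_one_val hn z hz
    have hzv : z.val ≠ 0 := fun hc => hz (by ext; simpa using hc)
    have hlt : z.val < n := z.isLt
    have hne : ¬ (z - 1).val = n - 1 := by omega
    rw [if_neg hne, if_neg hz]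

lemma G_spec [NeZero n] (hn : 2 ≤ n) (d : ℕ) (z : Fin n) :
    actW cerny z (G n d) = if z.val ≤ d then 0 else z - (d : Fin n) := by
  induction d generalizing z with
  | zero =>
      show z = _
      by_cases h : z.val ≤ 0
      · rw [if_pos h]
        ext; simpa using h
      · rw [if_neg h, Nat.cast_zero, sub_zero]
  | succ d ih =>
      show actW cerny z ((List.replicate (n-1) true ++ [false]) ++ G n d) = _
      rw [actW_append, step_eq hn, ]
      by_cases hz : z = 0
      · rw [if_pos hz, ih, if_pos (by simp), if_pos (by simp [hz])]
      · rw [if_neg hz, ih]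
        have hval : (z - 1).val = z.val - 1 := sub_one_val hn z hz
        have hzv : z.val ≠ 0 := fun hc => hz (by ext; simpa using hc)
        by_cases h : z.val ≤ d + 1
        · rw [if_pos (by omega), if_pos h]
        · rw [if_neg (by omega), if_neg h]
          push_cast
          ring

lemma key (hn : 2 ≤ n) (q : Fin n) :
    ∃ w : List Bool,
      (∀ z : Fin n, z ≠ q → actW cerny z w = ⟨0, by omega⟩) ∧
      actW cerny q w = ⟨1, by omega⟩ := by
  haveI : NeZero n := ⟨by omega⟩
  refine ⟨List.replicate ((-1 - q : Fin n)).val true ++ G n (n - 2), ?_, ?_⟩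
  · intro z hz
    rw [actW_append, actW_replicate_true, Fin.cast_val_eq_self, G_spec hn]
    have hne : z + (-1 - q) ≠ -1 := by
      intro hc
      apply hz
      have := congrArg (fun t => t + (1 + q)) hc
      simpa [sub_eq_add_neg] using by linear_combination hc
    have hv1 : (-1 : Fin n).val = n - 1 := by
      rw [Fin.coe_neg]
      have h1' : (1 : Fin n).val = 1 := by
        rw [Fin.val_one' n, Nat.mod_eq_of_lt (by omega)]
      rw [h1', Nat.mod_eq_of_lt (by omega)]
    have hvne : (z + (-1 - q)).val ≠ n - 1 := by
      intro hc
      exact hne (by ext; rw [hc, hv1])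
    have hlt : (z + (-1 - q)).val < n := Fin.isLt _
    rw [if_pos (by omega)]
    ext; simp
  · rw [actW_append, actW_replicate_true, Fin.cast_val_eq_self, G_spec hn]
    have hq : q + (-1 - q) = -1 := by ring
    rw [hq]
    have hv1 : (-1 : Fin n).val = n - 1 := by
      rw [Fin.coe_neg]
      have h1' : (1 : Fin n).val = 1 := by
        rw [Fin.val_one' n, Nat.mod_eq_of_lt (by omega)]
      rw [h1', Nat.mod_eq_of_lt (by omega)]
    rw [if_neg (by omega)]
    have hcast : ((n - 2 : ℕ) : Fin n) = -1 - 1 := by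
      rw [show n - 2 = n - 1 - 1 by omega, Nat.cast_sub (by omega),
        Nat.cast_sub (by omega), Fin.natCast_self, Nat.cast_one, zero_sub]
    rw [hcast]
    have : (-1 : Fin n) - (-1 - 1) = 1 := by ring
    rw [this]
    ext
    rw [Fin.val_one' n, Nat.mod_eq_of_lt (by omega)]

end CernyAux

namespace CernyAux

lemma half (hn : 2 ≤ n) (H S : Finset (Fin n)) (hH : 2 ≤ H.card) (hS : S.Nonempty)
    (q : Fin n) (hqH : q ∈ H) (hqS : q ∉ S) :
    ∃ w : List Bool, (S.image (fun z => actW cerny z w)).card = 1 ∧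
      1 < (H.image (fun z => actW cerny z w)).card := by
  obtain ⟨w, h0, h1⟩ := key hn q
  have zero_ne_one : (⟨0, by omega⟩ : Fin n) ≠ ⟨1, by omega⟩ := by
    intro hc; simpa using congrArg Fin.val hc
  refine ⟨w, ?_, ?_⟩
  · rw [Finset.card_eq_one]
    refine ⟨⟨0, by omega⟩, ?_⟩
    ext x
    simp only [Finset.mem_image, Finset.mem_singleton]
    constructor
    · rintro ⟨z, hz, rfl⟩
      exact h0 z (fun hc => hqS (hc ▸ hz))
    · rintro rfl
      obtain ⟨z, hz⟩ := hS
      exact ⟨z, hz, h0 z (fun hc => hqS (hc ▸ hz))⟩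
  · rw [Finset.one_lt_card]
    obtain ⟨z, hz, hzq⟩ := Finset.exists_mem_ne (s := H) (by omega) q
    refine ⟨⟨0, by omega⟩, ?_, ⟨1, by omega⟩, ?_, zero_ne_one⟩
    · exact Finset.mem_image.2 ⟨z, hz, h0 z hzq⟩
    · exact Finset.mem_image.2 ⟨q, hqH, h1⟩

end CernyAux


/-- in `C_n`, any two distinct non-singleton subsets are
distinguished by a word synchronizing exactly one of them; consequently they
are inequivalent as states of the power automaton. -/
theorem stmt_12 (n : ℕ) (hn : 2 ≤ n) (H S : Finset (Fin n))
    (hH : 2 ≤ H.card) (hS : 2 ≤ S.card) (hne : H ≠ S) :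
    (∃ w : List Bool,
      ((H.image (fun q => actW cerny q w)).card = 1 ∧
        1 < (S.image (fun q => actW cerny q w)).card) ∨
      ((S.image (fun q => actW cerny q w)).card = 1 ∧
        1 < (H.image (fun q => actW cerny q w)).card)) ∧
    {w : List Bool | (H.image (fun q => actW cerny q w)).card = 1}
      ≠ {w : List Bool | (S.image (fun q => actW cerny q w)).card = 1} := by
  have hq : ∃ q, (q ∈ H ∧ q ∉ S) ∨ (q ∈ S ∧ q ∉ H) := by
    by_contra hc
    push_neg at hc
    exact hne (Finset.ext fun a => by
      have := hc a
      tauto)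
  obtain ⟨q, hq⟩ := hq
  have hmain : ∃ w : List Bool,
      ((H.image (fun q => actW cerny q w)).card = 1 ∧
        1 < (S.image (fun q => actW cerny q w)).card) ∨
      ((S.image (fun q => actW cerny q w)).card = 1 ∧
        1 < (H.image (fun q => actW cerny q w)).card) := by
    rcases hq with ⟨hqH, hqS⟩ | ⟨hqS, hqH⟩
    · obtain ⟨w, h1, h2⟩ := CernyAux.half hn H S hH
        (Finset.card_pos.1 (by omega)) q hqH hqS
      exact ⟨w, Or.inr ⟨h1, h2⟩⟩
    · obtain ⟨w, h1, h2⟩ := CernyAux.half hn S H hS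
        (Finset.card_pos.1 (by omega)) q hqS hqH
      exact ⟨w, Or.inl ⟨h1, h2⟩⟩
  refine ⟨hmain, ?_⟩
  obtain ⟨w, hw⟩ := hmain
  intro heq
  rcases hw with ⟨h1, h2⟩ | ⟨h1, h2⟩
  · have : w ∈ {w : List Bool | (H.image (fun q => actW cerny q w)).card = 1} := h1
    rw [heq] at this
    simp only [Set.mem_setOf_eq] at this
    omega
  · have : w ∈ {w : List Bool | (S.image (fun q => actW cerny q w)).card = 1} := h1
    rw [← heq] at this
    simp only [Set.mem_setOf_eq] at this
    omega
end

section
/- For the Černý automaton C_n (n ≥ 2), the state complexity of the language Syn(C_n) of its synchronizing words equals 2^n − n. -/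
namespace CP
open Finset
open Fin.NatCast
open Fin.CommRing

variable {n : ℕ}

theorem actW_cons {Q A : Type*} (δ : Q → A → Q) (q : Q) (x : A) (w : List A) :
    actW δ q (x :: w) = actW δ (δ q x) w := rfl

theorem actW_append {Q A : Type*} (δ : Q → A → Q) (q : Q) (u v : List A) :
    actW δ q (u ++ v) = actW δ (actW δ q u) v := by
  simp [actW, List.foldl_append]

theorem cerny_true (hn : 2 ≤ n) (i : Fin n) :
    haveI : NeZero n := ⟨by omega⟩
    cerny i true = i + 1 := by
  apply Fin.ext
  simp [cerny, Fin.add_def, Fin.val_one']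

theorem cerny_false (i : Fin n) :
    cerny i false = if i.val = n - 1 then ⟨0, i.pos⟩ else i := rfl

theorem actW_replicate_true (hn : 2 ≤ n) (q : Fin n) (m : ℕ) :
    haveI : NeZero n := ⟨by omega⟩
    actW cerny q (List.replicate m true) = q + (m : Fin n) := by
  haveI : NeZero n := ⟨by omega⟩
  induction m generalizing q with
  | zero => simp [actW]
  | succ m ih =>
    rw [List.replicate_succ, actW_cons, cerny_true hn, ih, Nat.cast_add, Nat.cast_one]
    ring

theorem val_add_natCast (q : Fin n) (m : ℕ) [NeZero n] :
    (q + (m : Fin n)).val = (q.val + m) % n := by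
  rw [Fin.add_def, Fin.val_natCast]
  exact Nat.ModEq.add_left q.val (Nat.mod_modEq m n)

theorem add_one_eq (q : Fin n) [NeZero n] : q + 1 = q + ((1 : ℕ) : Fin n) := by
  norm_cast

def Aw (k : Fin n) : List Bool :=
  List.replicate (n - 1 - k.val) true ++ false :: List.replicate (k.val + 1) true

theorem actW_Aw (hn : 2 ≤ n) (k q : Fin n) :
    haveI : NeZero n := ⟨by omega⟩
    actW cerny q (Aw k) = if q = k then k + 1 else q := by
  haveI : NeZero n := ⟨by omega⟩
  have hk := k.isLt; have hq := q.isLt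
  rw [Aw, actW_append, actW_replicate_true hn, actW_cons, cerny_false]
  have hval : (q + ((n - 1 - k.val : ℕ) : Fin n)).val = (q.val + (n - 1 - k.val)) % n :=
    val_add_natCast q _
  by_cases h : q = k
  · subst h
    rw [if_pos rfl]
    have hc : (q + ((n - 1 - q.val : ℕ) : Fin n)).val = n - 1 := by
      rw [hval, show q.val + (n - 1 - q.val) = n - 1 by omega,
        Nat.mod_eq_of_lt (by omega)]
    rw [if_pos hc, actW_replicate_true hn]
    apply Fin.ext
    rw [val_add_natCast, add_one_eq, val_add_natCast]
    simp
  · have hne : (q + ((n - 1 - k.val : ℕ) : Fin n)).val ≠ n - 1 := by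
      rw [hval]
      have : q.val ≠ k.val := fun hc => h (Fin.ext hc)
      rcases Nat.lt_or_ge (q.val + (n - 1 - k.val)) n with h1 | h1
      · rw [Nat.mod_eq_of_lt h1]; omega
      · rw [Nat.mod_eq_sub_mod h1, Nat.mod_eq_of_lt (by omega)]; omega
    rw [if_neg h, if_neg hne, actW_replicate_true hn, add_assoc]
    have hz : ((n - 1 - k.val : ℕ) : Fin n) + ((k.val + 1 : ℕ) : Fin n) = 0 := by
      rw [← Nat.cast_add, show n - 1 - k.val + (k.val + 1) = n by omega]
      exact Fin.natCast_self n
    rw [hz, add_zero]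

def Ww [NeZero n] (p : Fin n) : ℕ → List Bool
  | 0 => []
  | j + 1 => Ww p j ++ Aw (p + ((j + 1 : ℕ) : Fin n))

theorem actW_Ww (hn : 2 ≤ n) (p : Fin n) (j : ℕ) (hj : j ≤ n - 2) (q : Fin n) :
    haveI : NeZero n := ⟨by omega⟩
    actW cerny q (Ww p j) =
      if 1 ≤ (q - p).val ∧ (q - p).val ≤ j then p + ((j + 1 : ℕ) : Fin n) else q := by
  haveI : NeZero n := ⟨by omega⟩
  induction j with
  | zero =>
    simp only [Ww]
    rw [if_neg (by omega)]
    rfl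
  | succ j ih =>
    have hj' : j ≤ n - 2 := by omega
    rw [Ww, actW_append, ih hj', actW_Aw hn]
    have hd := (q - p).isLt
    have hqp : p + (q - p) = q := by ring
    have hvc : (((j + 1 : ℕ)) : Fin n).val = j + 1 := by
      rw [Fin.val_natCast, Nat.mod_eq_of_lt (by omega)]
    by_cases h1 : 1 ≤ (q - p).val ∧ (q - p).val ≤ j
    · rw [if_pos h1, if_pos rfl, if_pos ⟨h1.1, by omega⟩]
      rw [add_assoc]
      congr 1
      rw [show ((j + 1 + 1 : ℕ) : Fin n) = ((j + 1 : ℕ) : Fin n) + 1 by push_cast; ring]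
    · rw [if_neg h1]
      by_cases h2 : (q - p).val = j + 1
      · have hq : q = p + ((j + 1 : ℕ) : Fin n) := by
          rw [← hqp]; congr 1
          rw [← h2, Fin.cast_val_eq_self]
        rw [if_pos hq, if_pos ⟨by omega, by omega⟩]
        push_cast
        ring
      · have hq : q ≠ p + ((j + 1 : ℕ) : Fin n) := by
          intro hc
          apply h2
          rw [hc] at hqp ⊢
          have : p + ((j+1:ℕ) : Fin n) - p = ((j+1:ℕ) : Fin n) := by ring
          rw [this, hvc]
        rw [if_neg hq, if_neg (by omega : ¬(1 ≤ (q - p).val ∧ (q - p).val ≤ j + 1))]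

def Uw [NeZero n] (p : Fin n) : List Bool := Ww p (n - 2)

theorem actW_Uw (hn : 2 ≤ n) (p q : Fin n) :
    haveI : NeZero n := ⟨by omega⟩
    actW cerny q (Uw p) = if q = p then p else p + ((n - 1 : ℕ) : Fin n) := by
  haveI : NeZero n := ⟨by omega⟩
  rw [Uw, actW_Ww hn p (n-2) le_rfl q, show n - 2 + 1 = n - 1 by omega]
  have hd := (q - p).isLt
  have hqp : p + (q - p) = q := by ring
  by_cases h : q = p
  · rw [if_pos h, if_neg (by simp [h])]
    exact h
  · rw [if_neg h]
    have hd1 : 1 ≤ (q - p).val := by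
      rcases Nat.eq_zero_or_pos (q - p).val with h0 | h0
      · exfalso; apply h
        have : q - p = 0 := Fin.ext (by simp [h0])
        rw [← hqp, this, add_zero]
      · exact h0
    by_cases h2 : (q - p).val ≤ n - 2
    · rw [if_pos ⟨hd1, h2⟩]
    · have : (q - p).val = n - 1 := by omega
      rw [if_neg (by omega)]
      rw [← hqp]
      congr 1
      rw [← this, Fin.cast_val_eq_self]

theorem one_ne_zero' (hn : 2 ≤ n) :
    haveI : NeZero n := ⟨by omega⟩
    (1 : Fin n) ≠ 0 := by
  haveI : NeZero n := ⟨by omega⟩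
  intro h
  have h2 := congrArg Fin.val h
  rw [Fin.val_one', Fin.val_zero, Nat.mod_eq_of_lt (by omega)] at h2
  omega

theorem image_Aw (hn : 2 ≤ n) (k : Fin n) (T : Finset (Fin n))
    (hk1 : haveI : NeZero n := ⟨by omega⟩; k + 1 ∈ T) :
    T.image (fun q => actW cerny q (Aw k)) = T.erase k := by
  haveI : NeZero n := ⟨by omega⟩
  have hkk : k + 1 ≠ k := by
    intro hc
    exact one_ne_zero' hn (by rwa [add_eq_left] at hc)
  ext x
  simp only [mem_image, mem_erase, actW_Aw hn]
  constructor
  · rintro ⟨q, hq, hx⟩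
    by_cases h : q = k
    · rw [if_pos h] at hx
      exact ⟨hx ▸ hkk, hx ▸ hk1⟩
    · rw [if_neg h] at hx
      exact ⟨hx ▸ h, hx ▸ hq⟩
  · rintro ⟨hxk, hxT⟩
    exact ⟨x, hxT, by rw [if_neg hxk]⟩

theorem exists_pred (hn : 2 ≤ n) (S : Finset (Fin n)) (hne : S.Nonempty)
    (hpr : S ≠ univ) :
    haveI : NeZero n := ⟨by omega⟩
    ∃ k, k ∉ S ∧ k + 1 ∈ S := by
  haveI : NeZero n := ⟨by omega⟩
  by_contra hc
  push_neg at hc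
  obtain ⟨k0, hk0⟩ : ∃ k0, k0 ∉ S := by
    by_contra h
    push_neg at h
    exact hpr (eq_univ_iff_forall.2 h)
  have hall : ∀ m : ℕ, k0 + (m : Fin n) ∉ S := by
    intro m
    induction m with
    | zero => simpa using hk0
    | succ m ih =>
      have := hc _ ih
      rwa [add_assoc, show ((m : Fin n) + 1) = ((m + 1 : ℕ) : Fin n) by push_cast; ring] at this
  obtain ⟨q, hq⟩ := hne
  apply hall (q - k0).val
  rwa [Fin.cast_val_eq_self, add_sub_cancel]

theorem reach_aux (hn : 2 ≤ n) :
    ∀ m : ℕ, ∀ S : Finset (Fin n), S.Nonempty → n - S.card ≤ m →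
      ∃ w, Finset.univ.image (fun q => actW cerny q w) = S := by
  haveI : NeZero n := ⟨by omega⟩
  intro m
  induction m with
  | zero =>
    intro S hne hcard
    have h1 := card_le_univ S
    rw [Fintype.card_fin] at h1
    have : S = univ := eq_univ_of_card S (by rw [Fintype.card_fin]; omega)
    subst this
    exact ⟨[], by simp [actW]⟩
  | succ m ih =>
    intro S hne hcard
    by_cases hu : S = univ
    · subst hu
      exact ⟨[], by simp [actW]⟩
    · obtain ⟨k, hk, hk1⟩ := exists_pred hn S hne hu
      obtain ⟨w', hw'⟩ := ih (insert k S) ⟨k, mem_insert_self k S⟩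
        (by rw [card_insert_of_notMem hk]; omega)
      refine ⟨w' ++ Aw k, ?_⟩
      have : (fun q : Fin n => actW cerny q (w' ++ Aw k)) =
          (fun q : Fin n => actW cerny q (Aw k)) ∘ (fun q : Fin n => actW cerny q w') := by
        funext q; simp [actW_append]
      rw [this, ← image_image, hw', image_Aw hn k _ (mem_insert_of_mem hk1),
        erase_insert hk]

theorem reach (hn : 2 ≤ n) (S : Finset (Fin n)) (hne : S.Nonempty) :
    ∃ w, Finset.univ.image (fun q => actW cerny q w) = S :=
  reach_aux hn n S hne (by omega)

theorem card_filter_card_le_one (hn : 2 ≤ n) :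
    (univ.filter (fun S : Finset (Fin n) => S.card ≤ 1)).card = n + 1 := by
  haveI : NeZero n := ⟨by omega⟩
  haveI : Nonempty (Fin n) := ⟨⟨0, by omega⟩⟩
  have heq : univ.filter (fun S : Finset (Fin n) => S.card ≤ 1) =
      insert ∅ (univ.image fun i : Fin n => ({i} : Finset (Fin n))) := by
    ext S
    simp only [mem_filter, mem_univ, true_and, mem_insert]
    constructor
    · intro hx
      rcases Finset.card_le_one_iff_subset_singleton.1 hx with ⟨x, hsub⟩
      rcases Finset.subset_singleton_iff.1 hsub with h | h
      · exact Or.inl h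
      · exact Or.inr (Finset.mem_image.2 ⟨x, mem_univ x, h.symm⟩)
    · rintro (rfl | hx)
      · simp
      · rcases Finset.mem_image.1 hx with ⟨x, -, rfl⟩
        simp
  rw [heq, card_insert_of_notMem (by simp), card_image_of_injective _
    Finset.singleton_injective, card_univ, Fintype.card_fin, add_comm]

theorem card_filter_two_le (hn : 2 ≤ n) :
    (univ.filter (fun S : Finset (Fin n) => 2 ≤ S.card)).card = 2 ^ n - (n + 1) := by
  have h2 : (univ.filter (fun S : Finset (Fin n) => ¬(S.card ≤ 1))).card = 2 ^ n - (n + 1) := by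
    have := Finset.card_filter_add_card_filter_not
      (s := (univ : Finset (Finset (Fin n)))) (p := fun S => S.card ≤ 1)
    rw [card_filter_card_le_one hn, card_univ, Fintype.card_finset, Fintype.card_fin] at this
    have hlt := Nat.lt_two_pow_self (n := n)
    omega
  rw [← h2]
  exact congrArg card (filter_congr fun S _ => by constructor <;> (intro; omega))

theorem two_pow_big (hn : 2 ≤ n) : n + 1 ≤ 2 ^ n := by
  have := Nat.lt_two_pow_self (n := n)
  omega

theorem distinguish (hn : 2 ≤ n) (S T : Finset (Fin n)) (hS : 2 ≤ S.card)
    (hT : T.Nonempty) (p : Fin n) (hpS : p ∈ S) (hpT : p ∉ T) :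
    ∃ u : List Bool, (T.image (fun q => actW cerny q u)).card = 1 ∧
      (S.image (fun q => actW cerny q u)).card ≠ 1 := by
  haveI : NeZero n := ⟨by omega⟩
  set c : Fin n := p + ((n - 1 : ℕ) : Fin n) with hc
  have hpc : p ≠ c := by
    intro hcc
    have h0 : ((n - 1 : ℕ) : Fin n) = 0 := by
      have := hcc.symm
      rwa [hc, add_eq_left] at this
    have h2 := congrArg Fin.val h0
    rw [Fin.val_natCast, Fin.val_zero, Nat.mod_eq_of_lt (by omega)] at h2
    omega
  refine ⟨Uw p, ?_, ?_⟩
  · have himg : T.image (fun q => actW cerny q (Uw p)) = {c} := by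
      have hcg : ∀ q ∈ T, actW cerny q (Uw p) = c := by
        intro q hq
        rw [actW_Uw hn, if_neg (by rintro rfl; exact hpT hq)]
      calc T.image (fun q => actW cerny q (Uw p)) = T.image (fun _ => c) :=
            Finset.image_congr hcg
        _ = {c} := Finset.image_const hT c
    rw [himg, card_singleton]
  · intro hcard
    rw [Finset.card_eq_one] at hcard
    obtain ⟨a, ha⟩ := hcard
    have h1 : actW cerny p (Uw p) ∈ S.image (fun q => actW cerny q (Uw p)) :=
      mem_image_of_mem _ hpS
    obtain ⟨s, hsS, hsp⟩ := Finset.exists_mem_ne (s := S) (by omega) p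
    have h2 : actW cerny s (Uw p) ∈ S.image (fun q => actW cerny q (Uw p)) :=
      mem_image_of_mem _ hsS
    rw [ha, mem_singleton] at h1 h2
    rw [actW_Uw hn, if_pos rfl] at h1
    rw [actW_Uw hn, if_neg hsp] at h2
    exact hpc (h1.trans h2.symm)

/-! ### Upper bound -/

def TT (n : ℕ) [NeZero n] := {S : Finset (Fin n) // 2 ≤ S.card ∨ S = {0}}

instance [NeZero n] : Fintype (TT n) := by unfold TT; infer_instance

def normT [NeZero n] (S : Finset (Fin n)) : TT n :=
  if h : 2 ≤ S.card then ⟨S, Or.inl h⟩ else ⟨{0}, Or.inr rfl⟩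

def delT [NeZero n] (s : TT n) (x : Bool) : TT n :=
  normT ((s.val).image (fun q => cerny q x))

theorem normT_eq_self [NeZero n] (S : Finset (Fin n)) (h : 2 ≤ S.card ∨ S = {0}) :
    normT S = ⟨S, h⟩ := by
  rcases h with h | h
  · exact dif_pos h
  · subst h
    have : ¬ 2 ≤ ({0} : Finset (Fin n)).card := by simp
    exact dif_neg this

theorem actW_delT [NeZero n] (w : List Bool) :
    ∀ (S : Finset (Fin n)) (h : 2 ≤ S.card ∨ S = {0}),
      actW delT ⟨S, h⟩ w = normT (S.image (fun q => actW cerny q w)) := by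
  induction w with
  | nil =>
    intro S h
    rw [show S.image (fun q => actW cerny q []) = S by simp [actW], normT_eq_self S h]
    rfl
  | cons x w ih =>
    intro S h
    show actW delT (delT ⟨S, h⟩ x) w = _
    show actW delT (normT (S.image (fun q => cerny q x))) w = _
    have himg : S.image (fun q => actW cerny q (x :: w)) =
        (S.image (fun q => cerny q x)).image (fun q => actW cerny q w) := by
      rw [Finset.image_image]
      rfl
    rw [himg]
    set S1 := S.image (fun q => cerny q x) with hS1
    by_cases h2 : 2 ≤ S1.card
    · rw [show normT S1 = ⟨S1, Or.inl h2⟩ from dif_pos h2]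
      exact ih S1 (Or.inl h2)
    · rw [show normT S1 = ⟨{0}, Or.inr rfl⟩ from dif_neg h2]
      rw [ih {0} (Or.inr rfl)]
      have hA : (({0} : Finset (Fin n)).image (fun q => actW cerny q w)).card ≤ 1 := by
        simp
      have hB : (S1.image (fun q => actW cerny q w)).card ≤ 1 :=
        le_trans card_image_le (by omega)
      rw [show normT (({0} : Finset (Fin n)).image (fun q => actW cerny q w))
            = ⟨{0}, Or.inr rfl⟩ from dif_neg (by omega),
          show normT (S1.image (fun q => actW cerny q w))
            = ⟨{0}, Or.inr rfl⟩ from dif_neg (by omega)]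

theorem normT_val_iff (hn : 2 ≤ n)
    [NeZero n] (I : Finset (Fin n)) (hne : I.Nonempty) :
    (normT I).val = {0} ↔ I.card = 1 := by
  by_cases h : 2 ≤ I.card
  · rw [show normT I = ⟨I, Or.inl h⟩ from dif_pos h]
    constructor
    · intro hI
      exfalso
      have hI' : I = {0} := hI
      rw [hI'] at h
      simp at h
    · intro h1
      exact absurd h1 (by omega)
  · rw [show normT I = ⟨{0}, Or.inr rfl⟩ from dif_neg h]
    have := card_pos.2 hne
    simp only [true_iff]
    omega

theorem card_TT (hn : 2 ≤ n) [NeZero n] : Fintype.card (TT n) = 2 ^ n - n := by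
  rw [show Fintype.card (TT n) =
      (univ.filter (fun S : Finset (Fin n) => 2 ≤ S.card ∨ S = {0})).card from
    Fintype.card_subtype _]
  have heq : univ.filter (fun S : Finset (Fin n) => 2 ≤ S.card ∨ S = {0}) =
      insert {0} (univ.filter fun S : Finset (Fin n) => 2 ≤ S.card) := by
    ext S
    simp only [mem_filter, mem_univ, true_and, mem_insert]
    constructor
    · rintro (h | h)
      · exact Or.inr h
      · exact Or.inl h
    · rintro (h | h)
      · exact Or.inr h
      · exact Or.inl h
  rw [heq, card_insert_of_notMem (by simp), card_filter_two_le hn]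
  have := two_pow_big hn
  omega

theorem upper (hn : 2 ≤ n) :
    ∃ (δ : Fin (2 ^ n - n) → Bool → Fin (2 ^ n - n)) (q0 : Fin (2 ^ n - n))
        (F : Set (Fin (2 ^ n - n))),
        ∀ w : List Bool,
          (Finset.univ.image (fun q : Fin n => actW cerny q w)).card = 1 ↔
            actW δ q0 w ∈ F := by
  haveI : NeZero n := ⟨by omega⟩
  have e : TT n ≃ Fin (2 ^ n - n) := Fintype.equivFinOfCardEq (card_TT hn)
  have huniv : 2 ≤ (univ : Finset (Fin n)).card ∨ (univ : Finset (Fin n)) = {0} := by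
    left
    rw [card_univ, Fintype.card_fin]
    omega
  refine ⟨fun i x => e (delT (e.symm i) x), e ⟨univ, huniv⟩,
    {i | (e.symm i).val = {0}}, ?_⟩
  have key : ∀ (w : List Bool) (s : TT n),
      actW (fun i x => e (delT (e.symm i) x)) (e s) w = e (actW delT s w) := by
    intro w
    induction w with
    | nil => intro s; rfl
    | cons x w ih =>
      intro s
      rw [actW_cons, actW_cons]
      have : e (delT (e.symm (e s)) x) = e (delT s x) := by
        rw [Equiv.symm_apply_apply]
      rw [this]
      exact ih (delT s x)
  intro w
  rw [key w ⟨univ, huniv⟩, Set.mem_setOf_eq, Equiv.symm_apply_apply,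
    actW_delT w univ huniv,
    normT_val_iff hn _ (Finset.Nonempty.image ⟨⟨0, by omega⟩, mem_univ _⟩ _)]

/-! ### Lower bound -/

theorem lower (hn : 2 ≤ n) (Q : Type) [Fintype Q] (δ : Q → Bool → Q) (q0 : Q)
    (F : Set Q)
    (h : ∀ w : List Bool,
      (Finset.univ.image (fun q : Fin n => actW cerny q w)).card = 1 ↔
        actW δ q0 w ∈ F) :
    2 ^ n - n ≤ Fintype.card Q := by
  haveI : NeZero n := ⟨by omega⟩
  classical
  obtain ⟨z, hzI⟩ := reach hn {0} (singleton_nonempty 0)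
  have hw : ∀ s : {S : Finset (Fin n) // 2 ≤ S.card},
      ∃ w, univ.image (fun q => actW cerny q w) = s.val := fun s =>
    reach hn s.val (card_pos.1 (by have := s.prop; omega))
  choose wf hwf using hw
  have himgapp : ∀ (w : List Bool) (S : Finset (Fin n)),
      univ.image (fun q : Fin n => actW cerny q w) = S →
      ∀ u, univ.image (fun q : Fin n => actW cerny q (w ++ u)) =
        S.image (fun q => actW cerny q u) := by
    intro w S hS u
    have hcomp : (fun q : Fin n => actW cerny q (w ++ u)) =
        (fun q : Fin n => actW cerny q u) ∘ (fun q : Fin n => actW cerny q w) := by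
      funext q; simp [actW_append]
    rw [hcomp, ← Finset.image_image, hS]
  have hext : ∀ w1 w2, actW δ q0 w1 = actW δ q0 w2 → ∀ u : List Bool,
      ((univ.image (fun q : Fin n => actW cerny q (w1 ++ u))).card = 1 ↔
       (univ.image (fun q : Fin n => actW cerny q (w2 ++ u))).card = 1) := by
    intro w1 w2 he u
    rw [h, h, actW_append, actW_append, he]
  set g : Option {S : Finset (Fin n) // 2 ≤ S.card} → Q := fun o =>
    Option.rec (actW δ q0 z) (fun s => actW δ q0 (wf s)) o with hg
  -- some-none distinctness
  have hsn : ∀ s : {S : Finset (Fin n) // 2 ≤ S.card},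
      actW δ q0 (wf s) ≠ actW δ q0 z := by
    intro s hab
    have h1 := h (wf s)
    have h2 := h z
    rw [hwf s] at h1
    rw [hzI] at h2
    rw [hab] at h1
    have hcs : s.val.card = 1 := h1.2 (h2.1 (by simp))
    have := s.prop
    omega
  -- some-some distinctness
  have hss : ∀ s t : {S : Finset (Fin n) // 2 ≤ S.card}, s ≠ t →
      actW δ q0 (wf s) ≠ actW δ q0 (wf t) := by
    have main : ∀ s t : {S : Finset (Fin n) // 2 ≤ S.card}, ∀ p : Fin n,
        p ∈ s.val → p ∉ t.val → actW δ q0 (wf s) ≠ actW δ q0 (wf t) := by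
      intro s t p hp1 hp2 hab
      obtain ⟨u, hu1, hu2⟩ := distinguish hn s.val t.val s.prop
        (card_pos.1 (by have := t.prop; omega)) p hp1 hp2
      have hiff := hext _ _ hab u
      rw [himgapp _ _ (hwf s) u, himgapp _ _ (hwf t) u] at hiff
      exact hu2 (hiff.2 hu1)
    intro s t hst hab
    have hvals : s.val ≠ t.val := fun hv => hst (Subtype.ext hv)
    obtain ⟨p, hp⟩ : ∃ p, (p ∈ s.val ∧ p ∉ t.val) ∨ (p ∈ t.val ∧ p ∉ s.val) := by
      by_contra hcp
      push_neg at hcp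
      apply hvals
      ext x
      have := hcp x
      tauto
    rcases hp with ⟨hp1, hp2⟩ | ⟨hp1, hp2⟩
    · exact main s t p hp1 hp2 hab
    · exact main t s p hp1 hp2 hab.symm
  have hginj : Function.Injective g := by
    intro a b hab
    match a, b with
    | none, none => rfl
    | some s, some t =>
      by_cases hst : s = t
      · rw [hst]
      · exact absurd hab (hss s t hst)
    | some s, none => exact absurd hab (hsn s)
    | none, some s => exact absurd hab.symm (hsn s)
  have hcard := Fintype.card_le_of_injective g hginj
  have hopt : Fintype.card (Option {S : Finset (Fin n) // 2 ≤ S.card}) =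
      2 ^ n - n := by
    rw [Fintype.card_option,
      show Fintype.card {S : Finset (Fin n) // 2 ≤ S.card} =
        (univ.filter (fun S : Finset (Fin n) => 2 ≤ S.card)).card from
        Fintype.card_subtype _,
      card_filter_two_le hn]
    have := two_pow_big hn
    omega
  omega

end CP

/-- the state complexity of the language of synchronizing words
of the Černý automaton `C_n` equals `2^n − n`: it is recognized by some DFA
with `2^n − n` states, and every DFA recognizing it has at least `2^n − n`
states. -/
theorem stmt_13 (n : ℕ) (hn : 2 ≤ n) :
    (∃ (δ : Fin (2 ^ n - n) → Bool → Fin (2 ^ n - n)) (q0 : Fin (2 ^ n - n))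
        (F : Set (Fin (2 ^ n - n))),
        ∀ w : List Bool,
          (Finset.univ.image (fun q : Fin n => actW cerny q w)).card = 1 ↔
            actW δ q0 w ∈ F) ∧
    (∀ (Q : Type) (_ : Fintype Q) (δ : Q → Bool → Q) (q0 : Q) (F : Set Q),
        (∀ w : List Bool,
          (Finset.univ.image (fun q : Fin n => actW cerny q w)).card = 1 ↔
            actW δ q0 w ∈ F) →
        2 ^ n - n ≤ Fintype.card Q) := by
  constructor
  · exact CP.upper hn
  · intro Q inst δ q0 F hF
    exact CP.lower hn Q δ q0 F hF
end
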